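/- If S is a type of system F with only positive quantifiers (a ∀⁺ type) and S is closed, then S is an output type. -/
import Mathlib


/-!
Common development: pure λ-calculus in de Bruijn notation, β-reduction,
weak head reduction, types of system F (with type constants), the typing
systems F, F₀ (F without (∀e)) and the simple system S, saturated sets and
interpretations, and the notions of input / output / data types, following
Farkh-Nour, "Les types de données syntaxiques du système F".
-/

namespace FarkhNour

/-- Pure λ-terms, in de Bruijn notation. -/
inductive Trm : Type
  | var : ℕ → Trm
  | app : Trm → Trm → Trm
  | lam : Trm → Trm

/-- Lift (shift) by `d` the free variables of a term, starting at index `k`. -/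
def liftTrm (d : ℕ) : ℕ → Trm → Trm
  | k, .var n => if n < k then .var n else .var (n + d)
  | k, .app a b => .app (liftTrm d k a) (liftTrm d k b)
  | k, .lam a => .lam (liftTrm d (k + 1) a)

/-- β-substitution `t[u/k]` (the binder for `k` is consumed: variables above `k`
are decremented), as used in the β-reduction rule. -/
def substTrm : Trm → ℕ → Trm → Trm
  | .var n, k, u => if n < k then .var n else if n = k then liftTrm k 0 u else .var (n - 1)
  | .app a b, k, u => .app (substTrm a k u) (substTrm b k u)
  | .lam a, k, u => .lam (substTrm a (k + 1) u)

/-- Named-style capture-avoiding substitution `t[u/x]` of the term `u` for the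
free variable `x` of `t` : the other free variables are left unchanged. -/
def replaceVar : Trm → ℕ → Trm → Trm
  | .var n, k, u => if n = k then u else .var n
  | .app a b, k, u => .app (replaceVar a k u) (replaceVar b k u)
  | .lam a, k, u => .lam (replaceVar a (k + 1) (liftTrm 1 0 u))

/-- Lifting of a parallel substitution under a binder. -/
def liftSub (σ : ℕ → Trm) : ℕ → Trm
  | 0 => .var 0
  | n + 1 => liftTrm 1 0 (σ n)

/-- Simultaneous (parallel) capture-avoiding substitution. -/
def msubst (σ : ℕ → Trm) : Trm → Trm
  | .var n => σ n
  | .app a b => .app (msubst σ a) (msubst σ b)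
  | .lam a => .lam (msubst (liftSub σ) a)

/-- One step of β-reduction. -/
inductive BetaStep : Trm → Trm → Prop
  | beta (t u : Trm) : BetaStep (.app (.lam t) u) (substTrm t 0 u)
  | appL {t t' : Trm} (u : Trm) : BetaStep t t' → BetaStep (.app t u) (.app t' u)
  | appR (t : Trm) {u u' : Trm} : BetaStep u u' → BetaStep (.app t u) (.app t u')
  | lam {t t' : Trm} : BetaStep t t' → BetaStep (.lam t) (.lam t')

/-- Many-step β-reduction `t →β t'`. -/
def BetaRed : Trm → Trm → Prop := Relation.ReflTransGen BetaStep

/-- β-equivalence `t ≃β t'`. -/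
def BetaEq : Trm → Trm → Prop := Relation.EqvGen BetaStep

/-- A term is normal iff no β-reduction step applies to it. -/
def IsNormal (t : Trm) : Prop := ∀ u, ¬ BetaStep t u

/-- `FreeIn k t` : the variable (de Bruijn index) `k` occurs free in `t`. -/
def FreeIn : ℕ → Trm → Prop
  | k, .var n => n = k
  | k, .app a b => FreeIn k a ∨ FreeIn k b
  | k, .lam a => FreeIn (k + 1) a

/-- A closed term. -/
def TrmClosed (t : Trm) : Prop := ∀ k, ¬ FreeIn k t

/-- One step of weak head reduction. -/
inductive WHStep : Trm → Trm → Prop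
  | beta (t u : Trm) : WHStep (.app (.lam t) u) (substTrm t 0 u)
  | app {t t' : Trm} (u : Trm) : WHStep t t' → WHStep (.app t u) (.app t' u)

/-- Weak head reduction `t ≻_f t'`. -/
def WHRed : Trm → Trm → Prop := Relation.ReflTransGen WHStep

/-- Types of system F, in de Bruijn notation, with type constants
(the constant `0` is the distinguished constant `O`, the constant `1` is `⊥`). -/
inductive Ty : Type
  | var : ℕ → Ty
  | const : ℕ → Ty
  | arr : Ty → Ty → Ty
  | all : Ty → Ty

/-- The distinguished type constant `O`. -/
def tyO : Ty := .const 0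

/-- The distinguished type constant `⊥`. -/
def tyBot : Ty := .const 1

/-- Lift (shift) by `d` the free type variables, starting at index `k`. -/
def liftTy (d : ℕ) : ℕ → Ty → Ty
  | k, .var n => if n < k then .var n else .var (n + d)
  | _, .const c => .const c
  | k, .arr a b => .arr (liftTy d k a) (liftTy d k b)
  | k, .all a => .all (liftTy d (k + 1) a)

/-- Capture-avoiding type substitution `A[G/k]`. -/
def substTy : Ty → ℕ → Ty → Ty
  | .var n, k, G => if n < k then .var n else if n = k then liftTy k 0 G else .var (n - 1)
  | .const c, _, _ => .const c
  | .arr a b, k, G => .arr (substTy a k G) (substTy b k G)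
  | .all a, k, G => .all (substTy a (k + 1) G)

/-- `TyFreeIn k A` : the type variable `k` occurs free in `A`. -/
def TyFreeIn : ℕ → Ty → Prop
  | k, .var n => n = k
  | _, .const _ => False
  | k, .arr a b => TyFreeIn k a ∨ TyFreeIn k b
  | k, .all a => TyFreeIn (k + 1) a

/-- Boolean version of `TyFreeIn`. -/
def tyFreeInB : ℕ → Ty → Bool
  | k, .var n => n == k
  | _, .const _ => false
  | k, .arr a b => tyFreeInB k a || tyFreeInB k b
  | k, .all a => tyFreeInB (k + 1) a

/-- A closed type. -/
def TyClosed (A : Ty) : Prop := ∀ k, ¬ TyFreeIn k A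

/-- `ContainsConst c A` : the type constant `c` occurs in `A`. -/
def ContainsConst : ℕ → Ty → Prop
  | _, .var _ => False
  | c, .const c' => c' = c
  | c, .arr a b => ContainsConst c a ∨ ContainsConst c b
  | c, .all a => ContainsConst c a

/-- The typing judgment `Γ ⊢_F t : A` of system F, with rules
(ax), (→i), (→e), (∀i), (∀e). -/
inductive TypF : List Ty → Trm → Ty → Prop
  | var (Γ : List Ty) (n : ℕ) (A : Ty) : Γ[n]? = some A → TypF Γ (.var n) A
  | abs {Γ : List Ty} {t : Trm} {B C : Ty} :
      TypF (B :: Γ) t C → TypF Γ (.lam t) (.arr B C)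
  | app {Γ : List Ty} {u v : Trm} {B C : Ty} :
      TypF Γ u (.arr B C) → TypF Γ v B → TypF Γ (.app u v) C
  | allI {Γ : List Ty} {t : Trm} {A : Ty} :
      TypF (Γ.map (liftTy 1 0)) t A → TypF Γ t (.all A)
  | allE {Γ : List Ty} {t : Trm} {A : Ty} (G : Ty) :
      TypF Γ t (.all A) → TypF Γ t (substTy A 0 G)

/-- The typing judgment `Γ ⊢_{F₀} t : A` of system F₀, i.e. system F
without the rule (∀e). -/
inductive TypF0 : List Ty → Trm → Ty → Prop
  | var (Γ : List Ty) (n : ℕ) (A : Ty) : Γ[n]? = some A → TypF0 Γ (.var n) A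
  | abs {Γ : List Ty} {t : Trm} {B C : Ty} :
      TypF0 (B :: Γ) t C → TypF0 Γ (.lam t) (.arr B C)
  | app {Γ : List Ty} {u v : Trm} {B C : Ty} :
      TypF0 Γ u (.arr B C) → TypF0 Γ v B → TypF0 Γ (.app u v) C
  | allI {Γ : List Ty} {t : Trm} {A : Ty} :
      TypF0 (Γ.map (liftTy 1 0)) t A → TypF0 Γ t (.all A)

/-- The typing judgment `Γ ⊢_S t : A` of the simple type system S,
with rules (ax), (→i), (→e) only. -/
inductive TypS : List Ty → Trm → Ty → Prop
  | var (Γ : List Ty) (n : ℕ) (A : Ty) : Γ[n]? = some A → TypS Γ (.var n) A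
  | abs {Γ : List Ty} {t : Trm} {B C : Ty} :
      TypS (B :: Γ) t C → TypS Γ (.lam t) (.arr B C)
  | app {Γ : List Ty} {u v : Trm} {B C : Ty} :
      TypS Γ u (.arr B C) → TypS Γ v B → TypS Γ (.app u v) C

/-- Quantifier-free types (types of the simple type system S). -/
def QFree : Ty → Prop
  | .var _ => True
  | .const _ => True
  | .arr a b => QFree a ∧ QFree b
  | .all _ => False

/-- An input type : a closed type all of whose normal inhabitants are
typable in system F₀. -/
def IsInputType (E : Ty) : Prop :=
  TyClosed E ∧ ∀ t : Trm, IsNormal t → TypF [] t E → TypF0 [] t E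

/-- An output type : a closed type `S` not containing the constant `O` such
that for every normal term `t`, if `α : O ⊢_F t : S` then `α ∉ Fv(t)`. -/
def IsOutputType (S : Ty) : Prop :=
  TyClosed S ∧ ¬ ContainsConst 0 S ∧
    ∀ t : Trm, IsNormal t → TypF [tyO] t S → ¬ FreeIn 0 t

/-- A syntactical data type : a closed type which is both input and output. -/
def IsSyntacticalDataType (D : Ty) : Prop := IsInputType D ∧ IsOutputType D

mutual
  /-- The ∀⁺ types (positive quantifiers). -/
  inductive PosTy : Ty → Prop
    | var (n : ℕ) : PosTy (.var n)
    | arr {B A : Ty} : NegTy B → PosTy A → PosTy (.arr B A)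
    | all {A : Ty} : PosTy A → TyFreeIn 0 A → PosTy (.all A)
  /-- The ∀⁻ types (negative quantifiers). -/
  inductive NegTy : Ty → Prop
    | var (n : ℕ) : NegTy (.var n)
    | arr {B A : Ty} : PosTy B → NegTy A → NegTy (.arr B A)
end

/-- `EndsInConst c A` : the type `A` ends in the type constant `c`. -/
inductive EndsInConst : ℕ → Ty → Prop
  | base (c : ℕ) : EndsInConst c (.const c)
  | arr {c : ℕ} {A : Ty} (B : Ty) : EndsInConst c A → EndsInConst c (.arr B A)
  | all {c : ℕ} {A : Ty} : EndsInConst c A → EndsInConst c (.all A)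

/-- `EndsInVar k A` : the type `A` ends in the type variable `k`
(crossing a quantifier ∀X with X ≠ the variable is allowed). -/
inductive EndsInVar : ℕ → Ty → Prop
  | base (k : ℕ) : EndsInVar k (.var k)
  | arr {k : ℕ} {A : Ty} (B : Ty) : EndsInVar k A → EndsInVar k (.arr B A)
  | all {k : ℕ} {A : Ty} : EndsInVar (k + 1) A → EndsInVar k (.all A)

/-- The side condition of the restricted rule (∀e)_F : the body `A` of `∀X A`
(the variable X having index `k`) is of the form
`∀X₀(A₁ → ∀X₁(A₂ → … → ∀X_{n-1}(A_n → ∀X_n Y)…))` with `Y = X` or one of the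
`A_i` ending in `X`. -/
inductive FFForm : ℕ → Ty → Prop
  | base (k : ℕ) : FFForm k (.var k)
  | all {k : ℕ} {A : Ty} : FFForm (k + 1) A → FFForm k (.all A)
  | arrTail {k : ℕ} {C : Ty} (B : Ty) : FFForm k C → FFForm k (.arr B C)
  | arrHit {k : ℕ} {B C : Ty} : EndsInVar k B → (∃ j, EndsInVar j C) →
      FFForm k (.arr B C)

/-- The typing judgment of system F_F : system F where the rule (∀e) is
replaced by the restricted rule (∀e)_F. -/
inductive TypFF : List Ty → Trm → Ty → Prop
  | var (Γ : List Ty) (n : ℕ) (A : Ty) : Γ[n]? = some A → TypFF Γ (.var n) A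
  | abs {Γ : List Ty} {t : Trm} {B C : Ty} :
      TypFF (B :: Γ) t C → TypFF Γ (.lam t) (.arr B C)
  | app {Γ : List Ty} {u v : Trm} {B C : Ty} :
      TypFF Γ u (.arr B C) → TypFF Γ v B → TypFF Γ (.app u v) C
  | allI {Γ : List Ty} {t : Trm} {A : Ty} :
      TypFF (Γ.map (liftTy 1 0)) t A → TypFF Γ t (.all A)
  | allE {Γ : List Ty} {t : Trm} {A : Ty} (G : Ty) :
      FFForm 0 A → TypFF Γ t (.all A) → TypFF Γ t (substTy A 0 G)

/-- An output type of system F_F. -/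
def IsOutputTypeFF (S : Ty) : Prop :=
  TyClosed S ∧ ¬ ContainsConst 0 S ∧
    ∀ t : Trm, IsNormal t → TypFF [tyO] t S → ¬ FreeIn 0 t

/-- Saturated sets of λ-terms. -/
def Saturated (G : Set Trm) : Prop := ∀ t u : Trm, WHRed t u → u ∈ G → t ∈ G

/-- `G → G'` on sets of λ-terms. -/
def SetArr (G G' : Set Trm) : Set Trm := {u : Trm | ∀ t ∈ G, Trm.app u t ∈ G'}

/-- Extension of an interpretation by a set for the (de Bruijn) variable 0. -/
def consEnv (G : Set Trm) (I : ℕ → Set Trm) : ℕ → Set Trm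
  | 0 => G
  | n + 1 => I n

/-- The value `|A|_I` of a type in an interpretation (`C` interprets the
type constants, `I` the type variables). -/
def TyVal (C : ℕ → Set Trm) : Ty → (ℕ → Set Trm) → Set Trm
  | .var n, I => I n
  | .const c, _ => C c
  | .arr a b, I => SetArr (TyVal C a I) (TyVal C b I)
  | .all a, I => {t : Trm | ∀ G : Set Trm, Saturated G → t ∈ TyVal C a (consEnv G I)}

/-- `|A|` : the intersection of the values of `A` under all interpretations
by saturated sets. -/
def TyGlobal (A : Ty) : Set Trm :=
  {t : Trm | ∀ C I : ℕ → Set Trm, (∀ c, Saturated (C c)) → (∀ n, Saturated (I n)) →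
    t ∈ TyVal C A I}

/-- A data type in Krivine's sense : a closed type `A` with `|A| ≠ ∅` such that
every term of `|A|` β-reduces to a closed term. -/
def IsDataType (A : Ty) : Prop :=
  TyClosed A ∧ TyGlobal A ≠ ∅ ∧
    ∀ t ∈ TyGlobal A, ∃ t' : Trm, BetaRed t t' ∧ TrmClosed t'

/-- The product type `A ∧ B = ∀X((A → (B → X)) → X)` (X fresh). -/
def tyAnd (A B : Ty) : Ty :=
  .all (.arr (.arr (liftTy 1 0 A) (.arr (liftTy 1 0 B) (.var 0))) (.var 0))

/-- The disjoint sum type `A ∨ B = ∀X((A → X) → ((B → X) → X))` (X fresh). -/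
def tyOr (A B : Ty) : Ty :=
  .all (.arr (.arr (liftTy 1 0 A) (.var 0))
    (.arr (.arr (liftTy 1 0 B) (.var 0)) (.var 0)))

/-- The type `LA = ∀X(X → ((A → (X → X)) → X))` of lists of objects of `A`. -/
def tyList (A : Ty) : Ty :=
  .all (.arr (.var 0)
    (.arr (.arr (liftTy 1 0 A) (.arr (.var 0) (.var 0))) (.var 0)))

/-- Negation `¬A = A → ⊥`. -/
def tyNeg (A : Ty) : Ty := .arr A tyBot

/-- The Gödel translation `A*` : every atomic subformula `R` is replaced
by `¬R`. -/
def godel : Ty → Ty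
  | .var n => .arr (.var n) tyBot
  | .const c => .arr (.const c) tyBot
  | .arr a b => .arr (godel a) (godel b)
  | .all a => .all (godel a)

/-- `T` is a storage operator for the pair of types `(E, S)`. -/
def IsStorageOpPair (T : Trm) (E S : Ty) : Prop :=
  TrmClosed T ∧
    ∀ t : Trm, TypF [] t E →
      ∃ τ τ' : Trm, BetaEq τ τ' ∧ TypF [] τ' S ∧
        ∀ θ : Trm, BetaEq θ t →
          ∀ f : ℕ, ¬ FreeIn f θ → ¬ FreeIn f τ →
            ∃ σ : ℕ → Trm,
              WHRed (.app (.app T θ) (.var f)) (.app (.var f) (msubst σ τ))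

/-- `T` is a storage operator for the type `D`. -/
def IsStorageOp (T : Trm) (D : Ty) : Prop := IsStorageOpPair T D D

/-- The term `λx₁…λxₙ.α` (n-fold abstraction over the free variable `α`). -/
def nlam (n a : ℕ) : Trm := Trm.lam^[n] (Trm.var (a + n))

/-- The term `p_n = λx₁…λxₙλx.x`. -/
def pTrm (n : ℕ) : Trm := Trm.lam^[n] (Trm.lam (Trm.var 0))

/-- `B₁ → … → B_n → A`. -/
def mkArr (Bs : List Ty) (A : Ty) : Ty := Bs.foldr Ty.arr A

/-- The length `Lg(E)` of a type : the number of occurrences of `→` in it. -/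
def Lg : Ty → ℕ
  | .var _ => 0
  | .const _ => 0
  | .arr a b => Lg a + Lg b + 1
  | .all a => Lg a

/-- `SubtypeOf A E` : `A` is a subtype (subformula) of `E`. -/
inductive SubtypeOf : Ty → Ty → Prop
  | refl (A : Ty) : SubtypeOf A A
  | arrL {A B C : Ty} : SubtypeOf A B → SubtypeOf A (.arr B C)
  | arrR {A B C : Ty} : SubtypeOf A C → SubtypeOf A (.arr B C)
  | all {A B : Ty} : SubtypeOf A B → SubtypeOf A (.all B)

/-- `InAppPos k t` : the variable `k` occurs in application (function)
position in `t`, i.e. some subterm of `t` is of the form `(k)u`. -/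
def InAppPos : ℕ → Trm → Prop
  | _, .var _ => False
  | k, .app u v => u = .var k ∨ InAppPos k u ∨ InAppPos k v
  | k, .lam u => InAppPos (k + 1) u

/-- The simple translation `A^s` : `X^s = X`, `(B → C)^s = B^s → C^s`,
`(∀X B)^s = B^s` (the variables freed by erasing the quantifiers are collapsed
onto the type variable `0`). `d` counts the erased quantifiers. -/
def eraseTyAux : ℕ → Ty → Ty
  | d, .var n => .var (n - d)
  | _, .const c => .const c
  | d, .arr a b => .arr (eraseTyAux d a) (eraseTyAux d b)
  | d, .all a => eraseTyAux (d + 1) a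

/-- The simple translation `A^s`. -/
def eraseTy : Ty → Ty := eraseTyAux 0

/-- The identity term `λx.x`. -/
def idTrm : Trm := .lam (.var 0)

/-- The boolean `𝟙 = λxλy.x`. -/
def oneTrm : Trm := .lam (.lam (.var 1))

/-- The pair of λ-terms `(T_F, T'_F)` associated with a type `F` (the
distinguished variable `X` having de Bruijn index `k`; the term variable `α`
is the free term variable `0`):
`T_F = T'_F = λx.x` if `X ∉ Fv(F)`;
`T_X = λxλβλg.(g)xα`, `T'_X = λx.(x)α𝟙`;
`T_{C→D} = λxλy.(T_D)(x)(T'_C)y`, `T'_{C→D} = λxλy.(T'_D)(x)(T_C)y`;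
`T_{∀Y B} = λx.(T_B)x`, `T'_{∀Y B} = λx.(T'_B)x`. -/
def TTpair : ℕ → Ty → Trm × Trm
  | k, .var n =>
      if n = k then
        (.lam (.lam (.lam (.app (.app (.var 0) (.var 2)) (.var 3)))),
         .lam (.app (.app (.var 0) (.var 1)) oneTrm))
      else (idTrm, idTrm)
  | _, .const _ => (idTrm, idTrm)
  | k, .arr C D =>
      if tyFreeInB k (.arr C D) then
        (.lam (.lam (.app (liftTrm 2 0 (TTpair k D).1)
            (.app (.var 1) (.app (liftTrm 2 0 (TTpair k C).2) (.var 0))))),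
         .lam (.lam (.app (liftTrm 2 0 (TTpair k D).2)
            (.app (.var 1) (.app (liftTrm 2 0 (TTpair k C).1) (.var 0))))))
      else (idTrm, idTrm)
  | k, .all B =>
      if tyFreeInB k (.all B) then
        (.lam (.app (liftTrm 1 0 (TTpair (k + 1) B).1) (.var 0)),
         .lam (.app (liftTrm 1 0 (TTpair (k + 1) B).2) (.var 0)))
      else (idTrm, idTrm)


/-! ### Auxiliary development for Statement 2 -/

section Aux2

/-- Pointwise-equal substitutions give equal results. -/
lemma msubst_ext : ∀ (t : Trm) {σ σ' : ℕ → Trm}, (∀ n, σ n = σ' n) →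
    msubst σ t = msubst σ' t := by
  intro t
  induction t with
  | var n => intro σ σ' h; exact h n
  | app a b iha ihb => intro σ σ' h; simp only [msubst, iha h, ihb h]
  | lam a ih =>
    intro σ σ' h
    simp only [msubst]
    rw [ih]
    intro n
    cases n with
    | zero => rfl
    | succ n => simp only [liftSub, h n]

lemma liftTrm_liftTrm (d j : ℕ) : ∀ (s : Trm) (i k : ℕ), i ≤ k →
    liftTrm d (k + j) (liftTrm j i s) = liftTrm j i (liftTrm d k s) := by
  intro s
  induction s with
  | var n =>
    intro i k hik
    by_cases h1 : n < i
    · have h2 : n < k := lt_of_lt_of_le h1 hik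
      simp [liftTrm, h1, h2, show n < k + j from by omega]
    · by_cases h2 : n < k
      · simp [liftTrm, h1, h2, show n + j < k + j from by omega]
      · simp [liftTrm, h1, h2, show ¬ n + j < k + j from by omega,
          show ¬ n + d < i from by omega]
        omega
  | app a b iha ihb => intro i k h; simp only [liftTrm, iha _ _ h, ihb _ _ h]
  | lam a ih =>
    intro i k h
    simp only [liftTrm]
    rw [show k + j + 1 = (k + 1) + j from by omega, ih (i+1) (k+1) (by omega)]

lemma liftTrm_add (a b : ℕ) : ∀ (s : Trm) (k : ℕ),
    liftTrm a k (liftTrm b k s) = liftTrm (a + b) k s := by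
  intro s
  induction s with
  | var n =>
    intro k
    by_cases h : n < k
    · simp [liftTrm, h]
    · simp [liftTrm, h, show ¬ n + b < k from by omega]
      omega
  | app u v ihu ihv => intro k; simp only [liftTrm, ihu, ihv]
  | lam u ih => intro k; simp only [liftTrm, ih]

lemma liftTrm_zero : ∀ (s : Trm) (k : ℕ), liftTrm 0 k s = s := by
  intro s
  induction s with
  | var n => intro k; by_cases h : n < k <;> simp [liftTrm, h]
  | app u v ihu ihv => intro k; simp only [liftTrm, ihu, ihv]
  | lam u ih => intro k; simp only [liftTrm, ih]

lemma msubst_liftTrm (d : ℕ) : ∀ (t : Trm) (k : ℕ) (σ : ℕ → Trm),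
    msubst σ (liftTrm d k t) = msubst (fun n => if n < k then σ n else σ (n + d)) t := by
  intro t
  induction t with
  | var n => intro k σ; by_cases h : n < k <;> simp [liftTrm, msubst, h]
  | app a b iha ihb => intro k σ; simp only [liftTrm, msubst, iha, ihb]
  | lam a ih =>
    intro k σ
    simp only [liftTrm, msubst, ih (k+1)]
    congr 1
    apply msubst_ext
    intro n
    cases n with
    | zero => simp [liftSub]
    | succ n =>
      by_cases h : n < k <;>
        simp [liftSub, h, Nat.succ_lt_succ_iff, show n + 1 + d = (n + d) + 1 from by omega]

lemma liftTrm_msubst (d : ℕ) : ∀ (t : Trm) (k : ℕ) (σ : ℕ → Trm),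
    liftTrm d k (msubst σ t) = msubst (fun n => liftTrm d k (σ n)) t := by
  intro t
  induction t with
  | var n => intro k σ; simp [msubst]
  | app a b iha ihb => intro k σ; simp only [liftTrm, msubst, iha, ihb]
  | lam a ih =>
    intro k σ
    simp only [liftTrm, msubst, ih (k+1)]
    congr 1
    apply msubst_ext
    intro n
    cases n with
    | zero => simp [liftSub, liftTrm]
    | succ n =>
      simp only [liftSub]
      exact liftTrm_liftTrm d 1 (σ n) 0 k (Nat.zero_le k)

lemma msubst_msubst : ∀ (t : Trm) (σ τ : ℕ → Trm),
    msubst σ (msubst τ t) = msubst (fun n => msubst σ (τ n)) t := by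
  intro t
  induction t with
  | var n => intro σ τ; simp [msubst]
  | app a b iha ihb => intro σ τ; simp only [msubst, iha, ihb]
  | lam a ih =>
    intro σ τ
    simp only [msubst, ih]
    congr 1
    apply msubst_ext
    intro n
    cases n with
    | zero => simp [liftSub, msubst]
    | succ n =>
      simp only [liftSub, msubst_liftTrm, liftTrm_msubst]
      apply msubst_ext
      intro m
      simp [liftSub]

lemma msubst_var : ∀ t : Trm, msubst Trm.var t = t := by
  intro t
  induction t with
  | var n => rfl
  | app a b iha ihb => simp only [msubst, iha, ihb]
  | lam a ih =>
    simp only [msubst]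
    rw [msubst_ext a (σ' := Trm.var), ih]
    intro n
    cases n <;> simp [liftSub, liftTrm]

/-- The single substitution `[u/k]` as a parallel substitution. -/
def singleSub (u : Trm) (k : ℕ) : ℕ → Trm := fun n =>
  if n < k then .var n else if n = k then liftTrm k 0 u else .var (n - 1)

lemma substTrm_eq_msubst (u : Trm) : ∀ (t : Trm) (k : ℕ),
    substTrm t k u = msubst (singleSub u k) t := by
  intro t
  induction t with
  | var n => intro k; simp [substTrm, msubst, singleSub]
  | app a b iha ihb => intro k; simp only [substTrm, msubst, iha, ihb]
  | lam a ih =>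
    intro k
    simp only [substTrm, msubst, ih (k+1)]
    congr 1
    apply msubst_ext
    intro n
    cases n with
    | zero => simp [singleSub, liftSub]
    | succ n =>
      by_cases h1 : n < k
      · simp [singleSub, liftSub, h1, Nat.succ_lt_succ_iff, liftTrm]
      · by_cases h2 : n = k
        · subst h2
          simp [singleSub, liftSub, liftTrm_add, Nat.add_comm]
        · simp [singleSub, liftSub, h1, h2, Nat.succ_lt_succ_iff, liftTrm,
            show ¬ n - 1 < 0 from by omega]
          omega

/-- Extending a parallel substitution with a head term. -/
def consSub (u : Trm) (σ : ℕ → Trm) : ℕ → Trm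
  | 0 => u
  | n + 1 => σ n

/-- The key β-substitution lemma. -/
lemma substTrm_msubst_beta (σ : ℕ → Trm) (u t : Trm) :
    substTrm (msubst (liftSub σ) t) 0 u = msubst (consSub u σ) t := by
  rw [substTrm_eq_msubst, msubst_msubst]
  apply msubst_ext
  intro n
  cases n with
  | zero => simp [liftSub, msubst, singleSub, liftTrm_zero, consSub]
  | succ n =>
    simp only [liftSub, consSub, msubst_liftTrm]
    rw [msubst_ext (σ n) (σ' := Trm.var), msubst_var]
    intro m
    simp [singleSub]

lemma freeIn_substTrm (u : Trm) : ∀ (b : Trm) (k : ℕ),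
    FreeIn (k + 1) b → FreeIn k (substTrm b k u) := by
  intro b
  induction b with
  | var n =>
    intro k h
    simp only [FreeIn] at h
    subst h
    simp [substTrm, show ¬ k + 1 < k from by omega, show ¬ k + 1 = k from by omega, FreeIn]
  | app a b iha ihb =>
    intro k h
    rcases h with h | h
    · exact Or.inl (iha k h)
    · exact Or.inr (ihb k h)
  | lam a ih =>
    intro k h
    exact ih (k + 1) h

mutual
  /-- Structural normal forms. -/
  inductive Nf : Trm → Prop
    | ne {t : Trm} : Ne t → Nf t
    | lam {t : Trm} : Nf t → Nf (.lam t)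
  /-- Structural neutral normal forms. -/
  inductive Ne : Trm → Prop
    | var (n : ℕ) : Ne (.var n)
    | app {u v : Trm} : Ne u → Nf v → Ne (.app u v)
end

lemma betaStep_not_nf : ∀ {t u : Trm}, BetaStep t u → Nf t → False := by
  intro t u h
  induction h with
  | beta a b =>
    intro h
    cases h with
    | ne h => cases h with | app h1 h2 => cases h1
  | appL u h ih =>
    intro hnf
    cases hnf with
    | ne hne => cases hne with | app h1 h2 => exact ih (Nf.ne h1)
  | appR t h ih =>
    intro hnf
    cases hnf with
    | ne hne => cases hne with | app h1 h2 => exact ih h2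
  | lam h ih =>
    intro hnf
    cases hnf with
    | ne hne => cases hne
    | lam h' => exact ih h'

lemma nf_isNormal {t : Trm} (h : Nf t) : IsNormal t := fun _ s => betaStep_not_nf s h

lemma isNormal_nf : ∀ t : Trm, IsNormal t → Nf t := by
  intro t
  induction t with
  | var n => intro _; exact Nf.ne (Ne.var n)
  | app a b iha ihb =>
    intro h
    have ha : IsNormal a := fun w s => h _ (BetaStep.appL b s)
    have hb : IsNormal b := fun w s => h _ (BetaStep.appR a s)
    cases iha ha with
    | ne hne => exact Nf.ne (Ne.app hne (ihb hb))
    | lam hnf => exact absurd (BetaStep.beta _ b) (h _)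
  | lam a ih =>
    intro h
    exact Nf.lam (ih (fun w s => h _ (BetaStep.lam s)))

lemma isNormal_of_lam {b : Trm} (h : IsNormal (.lam b)) : IsNormal b :=
  fun _ s => h _ (BetaStep.lam s)

lemma isNormal_app_left {a b : Trm} (h : IsNormal (.app a b)) : IsNormal a :=
  fun _ s => h _ (BetaStep.appL b s)

lemma isNormal_app_right {a b : Trm} (h : IsNormal (.app a b)) : IsNormal b :=
  fun _ s => h _ (BetaStep.appR a s)

lemma subst_var_ne_nf (m : ℕ) : ∀ b : Trm,
    (Ne b → ∀ k, Ne (substTrm b k (.var m))) ∧ (Nf b → ∀ k, Nf (substTrm b k (.var m))) := by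
  intro b
  induction b with
  | var n =>
    have key : ∀ k, ∃ j, substTrm (.var n) k (.var m) = .var j := by
      intro k
      by_cases h1 : n < k
      · exact ⟨n, by simp [substTrm, h1]⟩
      · by_cases h2 : n = k
        · exact ⟨m + k, by simp [substTrm, h1, h2, liftTrm]⟩
        · exact ⟨n - 1, by simp [substTrm, h1, h2]⟩
    constructor
    · intro _ k
      obtain ⟨j, hj⟩ := key k
      rw [hj]; exact Ne.var j
    · intro _ k
      obtain ⟨j, hj⟩ := key k
      rw [hj]; exact Nf.ne (Ne.var j)
  | app a b iha ihb =>
    have h1 : Ne (.app a b) → ∀ k, Ne (substTrm (.app a b) k (.var m)) := by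
      intro h k
      cases h with
      | app ha hb => exact Ne.app (iha.1 ha k) (ihb.2 hb k)
    refine ⟨h1, fun h k => ?_⟩
    cases h with
    | ne hne => exact Nf.ne (h1 hne k)
  | lam a ih =>
    constructor
    · intro h; cases h
    · intro h k
      cases h with
      | ne hne => cases hne
      | lam hnf =>
        show Nf (.lam (substTrm a (k+1) (.var m)))
        exact Nf.lam (ih.2 hnf (k+1))

lemma isNormal_subst_var {b : Trm} (h : IsNormal b) (m k : ℕ) :
    IsNormal (substTrm b k (.var m)) :=
  nf_isNormal ((subst_var_ne_nf m b).2 (isNormal_nf b h) k)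

lemma isNormal_app_var {t : Trm} (h : IsNormal t) (hnl : ∀ b, t ≠ .lam b) (m : ℕ) :
    IsNormal (.app t (.var m)) := by
  cases isNormal_nf t h with
  | ne hne => exact nf_isNormal (Nf.ne (Ne.app hne (Nf.ne (Ne.var m))))
  | lam hnf => exact absurd rfl (hnl _)

/-! ### Weak head reduction lemmas -/

lemma whStep_betaStep : ∀ {t u : Trm}, WHStep t u → BetaStep t u := by
  intro t u h
  induction h with
  | beta a b => exact BetaStep.beta a b
  | app s h ih => exact BetaStep.appL s ih

/-- Weak-head normal terms. -/
def WHNf (t : Trm) : Prop := ∀ u, ¬ WHStep t u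

lemma isNormal_whnf {t : Trm} (h : IsNormal t) : WHNf t :=
  fun u s => h u (whStep_betaStep s)

lemma whred_eq_of_whnf {t u : Trm} (hn : WHNf t) (h : WHRed t u) : u = t := by
  rcases Relation.ReflTransGen.cases_head h with h' | ⟨c, hc, _⟩
  · exact h'.symm
  · exact absurd hc (hn c)

lemma whred_appL {t t' s : Trm} (h : WHRed t t') : WHRed (.app t s) (.app t' s) := by
  induction h with
  | refl => exact Relation.ReflTransGen.refl
  | tail h1 h2 ih => exact Relation.ReflTransGen.tail ih (WHStep.app s h2)

lemma whnf_lam (b : Trm) : WHNf (.lam b) := by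
  intro u s; cases s

lemma whnf_var (n : ℕ) : WHNf (.var n) := by
  intro u s; cases s

/-- Decomposition of a weak head reduction of an application to a whnf. -/
lemma wh_app_decomp {t s w : Trm} (h : WHRed (.app t s) w) (hw : WHNf w) :
    (∃ t₀, WHRed t t₀ ∧ WHNf t₀ ∧ (∀ b, t₀ ≠ .lam b) ∧ w = .app t₀ s) ∨
    (∃ b, WHRed t (.lam b) ∧ WHRed (substTrm b 0 s) w) := by
  have main : ∀ {x : Trm}, WHRed x w → ∀ t s : Trm, x = .app t s →
      (∃ t₀, WHRed t t₀ ∧ WHNf t₀ ∧ (∀ b, t₀ ≠ .lam b) ∧ w = .app t₀ s) ∨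
      (∃ b, WHRed t (.lam b) ∧ WHRed (substTrm b 0 s) w) := by
    intro x hx
    induction hx using Relation.ReflTransGen.head_induction_on with
    | refl =>
      intro t s hts
      subst hts
      refine Or.inl ⟨t, Relation.ReflTransGen.refl, ?_, ?_, rfl⟩
      · intro v hv; exact hw _ (WHStep.app s hv)
      · rintro b rfl; exact hw _ (WHStep.beta b s)
    | head step tail ih =>
      intro t s hts
      subst hts
      cases step with
      | beta b u => exact Or.inr ⟨b, Relation.ReflTransGen.refl, tail⟩
      | app u hstep =>
        rcases ih _ _ rfl with ⟨t₀, h1, h2, h3, h4⟩ | ⟨b, h1, h2⟩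
        · exact Or.inl ⟨t₀, Relation.ReflTransGen.head hstep h1, h2, h3, h4⟩
        · exact Or.inr ⟨b, Relation.ReflTransGen.head hstep h1, h2⟩
  exact main h t s rfl

/-! ### The special saturated set -/

/-- The target set : weak-head normal terms which, if normal, do not contain
the distinguished free variable `0`. -/
def Ewh (w : Trm) : Prop := WHNf w ∧ (IsNormal w → ¬ FreeIn 0 w)

/-- The weak-head expansion closure of `Ewh`. -/
def Gstar : Set Trm := {t | ∃ w, WHRed t w ∧ Ewh w}

lemma gstar_saturated : Saturated Gstar := by
  rintro t u hr ⟨w, hw, he⟩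
  exact ⟨w, hr.trans hw, he⟩

lemma var_mem_gstar {m : ℕ} (hm : m ≠ 0) : (.var m : Trm) ∈ Gstar :=
  ⟨.var m, Relation.ReflTransGen.refl, whnf_var m, fun _ h => hm h⟩

lemma normal_mem_gstar {t : Trm} (hn : IsNormal t) (ht : t ∈ Gstar) : ¬ FreeIn 0 t := by
  obtain ⟨w, hw, h1, h2⟩ := ht
  rw [whred_eq_of_whnf (isNormal_whnf hn) hw] at h2
  exact h2 hn

/-- Neutral terms headed by a variable `≠ 0` all of whose arguments are in `Gstar`. -/
inductive GoodNe : Trm → Prop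
  | var {m : ℕ} : m ≠ 0 → GoodNe (.var m)
  | app {u s : Trm} : GoodNe u → s ∈ Gstar → GoodNe (.app u s)

lemma goodNe_whnf {u : Trm} (h : GoodNe u) : WHNf u := by
  induction h with
  | var hm => exact whnf_var _
  | app hu hs ih =>
    intro v s
    cases s with
    | beta b u => cases hu
    | app u hstep => exact ih _ hstep

lemma goodNe_free {u : Trm} (h : GoodNe u) : IsNormal u → ¬ FreeIn 0 u := by
  induction h with
  | var hm => intro _ hf; exact hm hf
  | app hu hs ih =>
    intro hn hf
    rcases hf with hf | hf
    · exact ih (isNormal_app_left hn) hf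
    · exact normal_mem_gstar (isNormal_app_right hn) hs hf

lemma goodNe_mem_gstar {u : Trm} (h : GoodNe u) : u ∈ Gstar :=
  ⟨u, Relation.ReflTransGen.refl, goodNe_whnf h, goodNe_free h⟩

/-! ### Saturation and interpretation lemmas -/

lemma liftTy_zero : ∀ (A : Ty) (k : ℕ), liftTy 0 k A = A := by
  intro A
  induction A with
  | var n => intro k; by_cases h : n < k <;> simp [liftTy, h]
  | const c => intro k; rfl
  | arr a b iha ihb => intro k; simp only [liftTy, iha, ihb]
  | all a ih => intro k; simp only [liftTy, ih]

lemma consEnv_saturated {G : Set Trm} {I : ℕ → Set Trm} (hG : Saturated G)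
    (hI : ∀ n, Saturated (I n)) : ∀ n, Saturated (consEnv G I n) := by
  intro n; cases n with
  | zero => exact hG
  | succ n => exact hI n

lemma setArr_saturated {G G' : Set Trm} (h : Saturated G') : Saturated (SetArr G G') := by
  intro t u hr hu s hs
  exact h _ _ (whred_appL hr) (hu s hs)

lemma tyVal_saturated (C : ℕ → Set Trm) (hC : ∀ c, Saturated (C c)) :
    ∀ (A : Ty) (I : ℕ → Set Trm), (∀ n, Saturated (I n)) → Saturated (TyVal C A I) := by
  intro A
  induction A with
  | var n => intro I hI; exact hI n
  | const c => intro I hI; exact hC c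
  | arr a b iha ihb => intro I hI; exact setArr_saturated (ihb I hI)
  | all a ih =>
    intro I hI t u hr hu G hG
    exact ih (consEnv G I) (consEnv_saturated hG hI) t u hr (hu G hG)

lemma tyVal_congr (C : ℕ → Set Trm) : ∀ (A : Ty) {I I' : ℕ → Set Trm},
    (∀ n, I n = I' n) → TyVal C A I = TyVal C A I' := by
  intro A
  induction A with
  | var n => intro I I' h; exact h n
  | const c => intro I I' h; rfl
  | arr a b iha ihb => intro I I' h; simp only [TyVal, iha h, ihb h]
  | all a ih =>
    intro I I' h
    have key : ∀ G : Set Trm, TyVal C a (consEnv G I) = TyVal C a (consEnv G I') := by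
      intro G
      apply ih
      intro n
      cases n with
      | zero => rfl
      | succ n => exact h n
    ext t
    simp only [TyVal, Set.mem_setOf_eq]
    exact ⟨fun hh G hG => (key G) ▸ hh G hG, fun hh G hG => (key G).symm ▸ hh G hG⟩

lemma tyVal_liftTy (C : ℕ → Set Trm) (d : ℕ) : ∀ (A : Ty) (k : ℕ) (I : ℕ → Set Trm),
    TyVal C (liftTy d k A) I = TyVal C A (fun n => I (if n < k then n else n + d)) := by
  intro A
  induction A with
  | var n =>
    intro k I
    by_cases h : n < k <;> simp [liftTy, TyVal, h]
  | const c => intro k I; simp [liftTy, TyVal]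
  | arr a b iha ihb => intro k I; simp only [liftTy, TyVal, iha, ihb]
  | all a ih =>
    intro k I
    simp only [liftTy, TyVal]
    have key : ∀ G : Set Trm, TyVal C (liftTy d (k+1) a) (consEnv G I) =
        TyVal C a (consEnv G (fun n => I (if n < k then n else n + d))) := by
      intro G
      rw [ih (k+1) (consEnv G I)]
      apply tyVal_congr
      intro n
      cases n with
      | zero => simp [consEnv]
      | succ n =>
        by_cases h : n < k <;>
          simp [consEnv, h, Nat.succ_lt_succ_iff, show n + 1 + d = (n + d) + 1 from by omega]
    ext t
    simp only [Set.mem_setOf_eq]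
    exact ⟨fun hh G hG => (key G) ▸ hh G hG, fun hh G hG => (key G).symm ▸ hh G hG⟩

lemma tyVal_substTy (C : ℕ → Set Trm) (G : Ty) : ∀ (A : Ty) (k : ℕ) (I : ℕ → Set Trm),
    TyVal C (substTy A k G) I = TyVal C A
      (fun n => if n < k then I n
        else if n = k then TyVal C (liftTy k 0 G) I else I (n - 1)) := by
  intro A
  induction A with
  | var n =>
    intro k I
    by_cases h1 : n < k
    · simp [substTy, TyVal, h1]
    · by_cases h2 : n = k <;> simp [substTy, TyVal, h1, h2]
  | const c => intro k I; simp [substTy, TyVal]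
  | arr a b iha ihb => intro k I; simp only [substTy, TyVal, iha, ihb]
  | all a ih =>
    intro k I
    simp only [substTy, TyVal]
    have key : ∀ H : Set Trm, TyVal C (substTy a (k+1) G) (consEnv H I) =
        TyVal C a (consEnv H (fun n => if n < k then I n
          else if n = k then TyVal C (liftTy k 0 G) I else I (n - 1))) := by
      intro H
      rw [ih (k+1) (consEnv H I)]
      apply tyVal_congr
      intro n
      cases n with
      | zero => simp [consEnv]
      | succ n =>
        by_cases h1 : n < k
        · simp [consEnv, h1, Nat.succ_lt_succ_iff]
        · by_cases h2 : n = k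
          · subst h2
            simp only [consEnv, if_neg (by omega : ¬ n + 1 < n + 1),
              if_pos rfl, if_neg h1, if_pos rfl]
            rw [tyVal_liftTy C (n+1) G 0 (consEnv H I), tyVal_liftTy C n G 0 I]
            apply tyVal_congr
            intro m
            simp [consEnv, show m + (n + 1) = (m + n) + 1 from by omega]
          · simp only [consEnv, if_neg (by omega : ¬ n + 1 < k + 1),
              if_neg (by omega : ¬ n + 1 = k + 1), if_neg h1, if_neg h2]
            rw [show n + 1 - 1 = (n - 1) + 1 from by omega]
    ext t
    simp only [Set.mem_setOf_eq]
    exact ⟨fun hh H hH => (key H) ▸ hh H hH, fun hh H hH => (key H).symm ▸ hh H hH⟩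

/-! ### Adequacy of the interpretation for system F -/

theorem adequacy {Γ : List Ty} {t : Trm} {A : Ty} (h : TypF Γ t A) :
    ∀ (C I : ℕ → Set Trm), (∀ c, Saturated (C c)) → (∀ n, Saturated (I n)) →
    ∀ σ : ℕ → Trm, (∀ n B, Γ[n]? = some B → σ n ∈ TyVal C B I) →
    msubst σ t ∈ TyVal C A I := by
  induction h with
  | var Γ n A hget =>
    intro C I hC hI σ hσ
    exact hσ n A hget
  | abs hder ih =>
    intro C I hC hI σ hσ
    rename_i Γ t B C' 
    intro u hu
    apply tyVal_saturated C hC C' I hI _ _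
      (Relation.ReflTransGen.single (WHStep.beta _ u))
    rw [substTrm_msubst_beta]
    apply ih C I hC hI
    intro n B' hget
    cases n with
    | zero =>
      simp only [List.getElem?_cons_zero, Option.some.injEq] at hget
      subst hget; exact hu
    | succ n =>
      simp only [List.getElem?_cons_succ] at hget
      exact hσ n B' hget
  | app hu hv ihu ihv =>
    intro C I hC hI σ hσ
    exact ihu C I hC hI σ hσ _ (ihv C I hC hI σ hσ)
  | allI hder ih =>
    intro C I hC hI σ hσ
    intro G hG
    apply ih C (consEnv G I) hC (consEnv_saturated hG hI)
    intro n B' hget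
    rw [List.getElem?_map] at hget
    rcases Option.map_eq_some_iff.1 hget with ⟨B, hB, rfl⟩
    rw [tyVal_liftTy C 1 B 0 (consEnv G I)]
    have henv : TyVal C B (fun n => consEnv G I (if n < 0 then n else n + 1)) =
        TyVal C B I := by
      apply tyVal_congr
      intro n
      simp [consEnv]
    rw [henv]
    exact hσ n B hB
  | allE G hder ih =>
    rename_i Γ' t' A'
    intro C I hC hI σ hσ
    have h2 := ih C I hC hI σ hσ (TyVal C G I) (tyVal_saturated C hC G I hI)
    rw [tyVal_substTy C G _ 0 I]
    have henv : TyVal C A' (consEnv (TyVal C G I) I) = TyVal C A'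
        (fun n => if n < 0 then I n
          else if n = 0 then TyVal C (liftTy 0 0 G) I else I (n - 1)) := by
      apply tyVal_congr
      intro n
      cases n with
      | zero => simp [consEnv, liftTy_zero]
      | succ n => simp [consEnv]
    exact henv ▸ h2

/-! ### The main lemma on positive / negative types -/

/-- The interpretation sending every type variable to `Gstar`. -/
def IG : ℕ → Set Trm := fun _ => Gstar

/-- The interpretation sending every type constant to the set of all terms. -/
def CU : ℕ → Set Trm := fun _ => (Set.univ : Set Trm)

lemma univ_saturated : Saturated (Set.univ : Set Trm) := fun t _ _ _ => Set.mem_univ t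

lemma main_pos_neg : ∀ A : Ty,
    (PosTy A → TyVal CU A IG ⊆ Gstar) ∧
    (NegTy A → ∀ u, GoodNe u → u ∈ TyVal CU A IG) := by
  intro A
  induction A with
  | var n =>
    refine ⟨fun _ t ht => ht, fun _ u hu => ?_⟩
    exact goodNe_mem_gstar hu
  | const c => exact ⟨(fun h => by cases h), (fun h => by cases h)⟩
  | arr B A ihB ihA =>
    constructor
    · intro h t ht
      cases h with
      | arr hB hA =>
        have hv : (.var 1 : Trm) ∈ TyVal CU B IG :=
          ihB.2 hB _ (GoodNe.var one_ne_zero)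
        have happ : (.app t (.var 1) : Trm) ∈ Gstar := ihA.1 hA (ht _ hv)
        obtain ⟨w, hred, hwnf, hwfree⟩ := happ
        rcases wh_app_decomp hred hwnf with ⟨t₀, h1, h2, h3, rfl⟩ | ⟨b, h1, h2⟩
        · refine ⟨t₀, h1, h2, fun hnorm => ?_⟩
          have hn : IsNormal (.app t₀ (.var 1)) := isNormal_app_var hnorm h3 1
          intro hf
          exact hwfree hn (Or.inl hf)
        · refine ⟨.lam b, h1, whnf_lam b, fun hnorm => ?_⟩
          have hbn : IsNormal b := isNormal_of_lam hnorm
          have hsn : IsNormal (substTrm b 0 (.var 1)) := isNormal_subst_var hbn 1 0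
          have hw : w = substTrm b 0 (.var 1) := whred_eq_of_whnf (isNormal_whnf hsn) h2
          subst hw
          intro hf
          exact hwfree hsn (freeIn_substTrm (.var 1) b 0 hf)
    · intro h u hu
      cases h with
      | arr hB' hA' =>
        intro s hs
        exact ihA.2 hA' _ (GoodNe.app hu (ihB.1 hB' hs))
  | all a iha =>
    constructor
    · intro h t ht
      cases h with
      | all ha hfree =>
        have h1 : t ∈ TyVal CU a (consEnv Gstar IG) := ht Gstar gstar_saturated
        have henv : TyVal CU a (consEnv Gstar IG) = TyVal CU a IG := by
          apply tyVal_congr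
          intro n
          cases n <;> rfl
        rw [henv] at h1
        exact iha.1 ha h1
    · intro h; cases h

lemma pos_neg_no_const : ∀ A : Ty,
    (PosTy A → ∀ c, ¬ ContainsConst c A) ∧ (NegTy A → ∀ c, ¬ ContainsConst c A) := by
  intro A
  induction A with
  | var n => exact ⟨fun _ c h => h, fun _ c h => h⟩
  | const c => exact ⟨(fun h => by cases h), (fun h => by cases h)⟩
  | arr B A ihB ihA =>
    constructor
    · intro h c hc
      cases h with
      | arr hB hA =>
        rcases hc with hc | hc
        · exact ihB.2 hB c hc
        · exact ihA.1 hA c hc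
    · intro h c hc
      cases h with
      | arr hB hA =>
        rcases hc with hc | hc
        · exact ihB.1 hB c hc
        · exact ihA.2 hA c hc
  | all a iha =>
    constructor
    · intro h c hc
      cases h with
      | all ha _ => exact iha.1 ha c hc
    · intro h; cases h

end Aux2

/-- a closed ∀⁺ type of system F is an output type. -/
theorem pos_type_is_output_type (S : Ty) (hS : PosTy S) (hC : TyClosed S) :
    IsOutputType S := by
  refine ⟨hC, (pos_neg_no_const S).1 hS 0, ?_⟩
  intro t hnorm htyp
  have hσ : ∀ n B, ([tyO] : List Ty)[n]? = some B → Trm.var n ∈ TyVal CU B IG := by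
    intro n B hget
    cases n with
    | zero =>
      simp only [List.getElem?_cons_zero, Option.some.injEq] at hget
      subst hget
      exact Set.mem_univ _
    | succ n => simp at hget
  have h1 := adequacy htyp CU IG (fun _ => univ_saturated) (fun _ => gstar_saturated)
    Trm.var hσ
  rw [msubst_var] at h1
  have h2 : t ∈ Gstar := (main_pos_neg S).1 hS h1
  exact normal_mem_gstar hnorm h2

end FarkhNour
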